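/- arXiv:1708.00001 — 3 statements merged into one kernel-verified Lean document; each statement's English description precedes it below -/
import Mathlib

section
/- For j a nonnegative integer, the Fourier-type integral ∫_{-∞}^{∞} e^{ikx} (2 cosh(sk))^{-(j+1)} dk is a strictly positive real number for every real x (here s > 0 is a fixed real constant). -/
/-!
The substitution `p = σ(2sk)`, with `σ` the logistic sigmoid, turns the integral into
`(2s)⁻¹ B(z, z̄)` for `z = (j + 1)/2 + i x/(2s)`, because `σ(t) = e^{t/2} / (2 cosh(t/2))`.
Since `Γ(z̄) = conj Γ(z)`, the Beta integral is `B(z, z̄) = |Γ(z)|² / Γ(j + 1) > 0`.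
-/

open MeasureTheory Complex
open scoped ComplexConjugate

lemma Complex.ofReal_exp_cpow (r : ℝ) (z : ℂ) :
    ((Real.exp r : ℝ) : ℂ) ^ z = exp (r * z) := by
  rw [cpow_def_of_ne_zero (ofReal_ne_zero.mpr (Real.exp_ne_zero r)),
    ← ofReal_log (Real.exp_pos r).le, Real.log_exp]

lemma Real.sigmoid_eq_exp_sub_log_two_cosh (t : ℝ) :
    sigmoid t = Real.exp (t / 2 - Real.log (2 * Real.cosh (t / 2))) := by
  rw [Real.exp_sub, Real.exp_log (by positivity), sigmoid_def, Real.cosh_eq]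
  have h : Real.exp (-t) = Real.exp (-(t / 2)) / Real.exp (t / 2) := by
    rw [← Real.exp_sub]; ring_nf
  rw [h]
  field_simp

lemma Complex.sigmoid_cpow_mul_sigmoid_neg_cpow (t : ℝ) (z w : ℂ) :
    (Real.sigmoid t : ℂ) ^ z * (Real.sigmoid (-t) : ℂ) ^ w =
      exp ((z - w) * t / 2) / ((2 * Real.cosh (t / 2) : ℝ) : ℂ) ^ (z + w) := by
  set L := Real.log (2 * Real.cosh (t / 2))
  have hpow : ((2 * Real.cosh (t / 2) : ℝ) : ℂ) ^ (z + w) = exp (L * (z + w)) := by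
    rw [← ofReal_exp_cpow, Real.exp_log (by positivity)]
  rw [Real.sigmoid_eq_exp_sub_log_two_cosh, Real.sigmoid_eq_exp_sub_log_two_cosh, neg_div,
    Real.cosh_neg, hpow, ofReal_exp_cpow, ofReal_exp_cpow, ← exp_add, ← exp_sub]
  congr 1
  push_cast
  ring

lemma Complex.betaIntegral_eq_integral_sigmoid (z w : ℂ) :
    betaIntegral z w = ∫ t : ℝ, (Real.sigmoid t : ℂ) ^ z * (Real.sigmoid (-t) : ℂ) ^ w := by
  have key := integral_image_eq_integral_abs_deriv_smul MeasurableSet.univ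
    (fun t _ => (Real.hasDerivAt_sigmoid t).hasDerivWithinAt) Real.sigmoid_injective.injOn
    (fun p : ℝ => (p : ℂ) ^ (z - 1) * ((1 - p : ℝ) : ℂ) ^ (w - 1))
  rw [Set.image_univ, Real.range_sigmoid, Measure.restrict_univ] at key
  rw [betaIntegral, intervalIntegral.integral_of_le zero_le_one, integral_Ioc_eq_integral_Ioo]
  push_cast at key
  rw [key]
  congr 1 with t
  have h0 : (Real.sigmoid t : ℂ) ≠ 0 := ofReal_ne_zero.mpr (Real.sigmoid_pos t).ne'
  have h1 : (Real.sigmoid (-t) : ℂ) ≠ 0 := ofReal_ne_zero.mpr (Real.sigmoid_pos (-t)).ne'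
  have hneg : (1 : ℂ) - Real.sigmoid t = Real.sigmoid (-t) := by
    rw [Real.sigmoid_neg]; push_cast; ring
  rw [← Real.sigmoid_neg, abs_of_pos (mul_pos (Real.sigmoid_pos t) (Real.sigmoid_pos (-t))),
    hneg, cpow_sub _ _ h0, cpow_sub _ _ h1, cpow_one, cpow_one, real_smul]
  push_cast
  field_simp

lemma Complex.betaIntegral_self_conj {z : ℂ} (hz : 0 < z.re) :
    betaIntegral z (conj z) = ((normSq (Gamma z) / Real.Gamma (2 * z.re) : ℝ) : ℂ) := by
  have hΓ : 0 < Real.Gamma (2 * z.re) := Real.Gamma_pos_of_pos (by positivity)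
  have h := Gamma_mul_Gamma_eq_betaIntegral (t := conj z) hz (by rwa [conj_re])
  rw [Gamma_conj, mul_conj, add_conj, Gamma_ofReal] at h
  rw [ofReal_div, h, mul_div_cancel_left₀ _ (ofReal_ne_zero.mpr hΓ.ne')]

lemma integral_exp_mul_div_two_cosh_pow {s : ℝ} (hs : s ≠ 0) (n : ℕ) (x : ℝ) :
    ∫ k : ℝ, exp (I * k * x) / ((2 * Real.cosh (s * k) : ℝ) : ℂ) ^ n =
      (|2 * s|⁻¹ : ℝ) • betaIntegral (n / 2 + (x / (2 * s) : ℝ) * I)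
        (conj (n / 2 + (x / (2 * s) : ℝ) * I)) := by
  set z : ℂ := n / 2 + (x / (2 * s) : ℝ) * I
  have hsub : z - conj z = (x / s : ℝ) * I := by
    simp only [z, map_add, map_mul, map_div₀, conj_ofReal, conj_natCast, conj_I, map_ofNat]
    push_cast; field_simp; ring
  have hadd : z + conj z = n := by
    simp only [z, map_add, map_mul, map_div₀, conj_ofReal, conj_natCast, conj_I, map_ofNat]
    ring
  rw [betaIntegral_eq_integral_sigmoid, ← abs_inv, ← Measure.integral_comp_mul_left
    (fun t => (Real.sigmoid t : ℂ) ^ z * (Real.sigmoid (-t) : ℂ) ^ conj z)]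
  congr 1 with k
  rw [sigmoid_cpow_mul_sigmoid_neg_cpow, hsub, hadd, cpow_natCast]
  congr 2
  · have : (s : ℂ) ≠ 0 := ofReal_ne_zero.mpr hs
    push_cast; field_simp
  · field_simp

/-- For `j ∈ ℤ_{≥0}`, the integral `∫ e^{ikx} (2 cosh(sk))^{-(j+1)} dk` is a strictly
positive real number, for every `x ∈ ℝ` (with `s > 0` fixed). -/
theorem stmt_0 (s : ℝ) (hs : 0 < s) (j : ℕ) (x : ℝ) :
    (∫ k : ℝ, Complex.exp (Complex.I * k * x) /
        ((2 * Real.cosh (s * k) : ℝ) : ℂ) ^ (j + 1)).im = 0 ∧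
    0 < (∫ k : ℝ, Complex.exp (Complex.I * k * x) /
        ((2 * Real.cosh (s * k) : ℝ) : ℂ) ^ (j + 1)).re := by
  set z : ℂ := ((j + 1 : ℕ) : ℂ) / 2 + (x / (2 * s) : ℝ) * I
  have hz : 0 < z.re := by
    simp only [z, Nat.cast_add, Nat.cast_one, add_re, div_ofNat_re, natCast_re, one_re, mul_re,
      ofReal_re, I_re, mul_zero, ofReal_im, I_im, mul_one, sub_self, add_zero]
    positivity
  have hΓ : 0 < normSq (Gamma z) := normSq_pos.mpr (Gamma_ne_zero_of_re_pos hz)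
  have hΓ' : 0 < Real.Gamma (2 * z.re) := Real.Gamma_pos_of_pos (by positivity)
  rw [integral_exp_mul_div_two_cosh_pow hs.ne', betaIntegral_self_conj hz, real_smul,
    ← ofReal_mul, ofReal_im, ofReal_re]
  exact ⟨rfl, by positivity⟩
end

section
/- Fix s > 0 and γ ∈ ℝ with sin γ ≠ 0; let d = 2 cos γ and define φ_d(z) = (1/(2s sin γ)) · sinh(((π − γ)/s) z) / sinh((π/s) z). Then φ_d is meromorphic on ℂ, is analytic on ℂ \ (i s ℤ) (the apparent singularity at z = 0 is removable), and satisfies the functional equation φ_d(z + is) + φ_d(z − is) − d·φ_d(z) = 0 for all z ∉ i s ℤ. -/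
/-!
The numerator and denominator are entire, so the quotient is meromorphic, and it is holomorphic
wherever `sinh ((π / s) z) ≠ 0`, i.e. off `i s ℤ`. At `0` both vanish to first order, so dividing
each by `z` (their `dslope` at `0`) removes the singularity. Shifting by `± i s` turns
`sinh ((π / s) z)` into `-sinh ((π / s) z)` and `sinh (((π - γ) / s) z)` into
`sinh (((π - γ) / s) z ± (π - γ) i)`, whose sum is `2 cos (π - γ) sinh (((π - γ) / s) z)`;
since `cos (π - γ) = -cos γ`, the functional equation holds for every `z`.
-/

open Complex
open scoped Real

theorem Complex.sinh_eq_zero_iff {w : ℂ} : sinh w = 0 ↔ ∃ n : ℤ, w = n * π * I := by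
  have h : sinh w = -sin (w * I) * I := by
    rw [sin_mul_I, neg_mul, mul_assoc, I_mul_I]; ring
  rw [h, mul_eq_zero, neg_eq_zero, or_iff_left I_ne_zero, sin_eq_zero_iff]
  refine ⟨fun ⟨n, hn⟩ => ⟨-n, ?_⟩, fun ⟨n, hn⟩ => ⟨-n, ?_⟩⟩
  · push_cast
    linear_combination (-I) * hn + w * I_sq
  · rw [hn]; push_cast; ring_nf; rw [I_sq]; ring

theorem sinh_pi_div_mul_eq_zero_iff {s : ℂ} (hs : s ≠ 0) (z : ℂ) :
    sinh (π / s * z) = 0 ↔ ∃ n : ℤ, z = I * s * n := by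
  have hπ : (π : ℂ) ≠ 0 := ofReal_ne_zero.2 Real.pi_ne_zero
  rw [Complex.sinh_eq_zero_iff]
  refine exists_congr fun n => ⟨fun hn => ?_, fun hn => ?_⟩
  · field_simp at hn
    rw [hn]; ring
  · rw [hn]; field_simp

theorem sinh_add_mul_I_add_sinh_sub_mul_I (x θ : ℂ) :
    sinh (x + θ * I) + sinh (x - θ * I) = 2 * cos θ * sinh x := by
  rw [sinh_add, sinh_sub, sinh_mul_I, cosh_mul_I]; ring

theorem meromorphicOn_sinh_mul_div_sinh_mul (a b : ℂ) :
    MeromorphicOn (fun z => sinh (a * z) / sinh (b * z)) Set.univ := by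
  have hsinh (c : ℂ) : MeromorphicOn (fun z => sinh (c * z)) Set.univ :=
    AnalyticOnNhd.meromorphicOn fun z _ => by fun_prop
  exact (hsinh a).fun_div (hsinh b)

theorem differentiableAt_sinh_mul_div_sinh_mul (a b : ℂ) {z : ℂ} (hz : sinh (b * z) ≠ 0) :
    DifferentiableAt ℂ (fun z => sinh (a * z) / sinh (b * z)) z :=
  DifferentiableAt.div (by fun_prop) (by fun_prop) hz

theorem exists_differentiableOn_eq_sinh_mul_div_sinh_mul (a : ℂ) {b : ℂ} (hb : b ≠ 0) :
    ∃ Φ : ℂ → ℂ, DifferentiableOn ℂ Φ {z | sinh (b * z) = 0 → z = 0} ∧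
      ∀ z ≠ 0, Φ z = sinh (a * z) / sinh (b * z) := by
  have hdslope (c : ℂ) : Differentiable ℂ (dslope (fun z => sinh (c * z)) 0) := by
    rw [← differentiableOn_univ, Complex.differentiableOn_dslope Filter.univ_mem]
    fun_prop
  have hdslope_of_ne (c : ℂ) {z : ℂ} (hz : z ≠ 0) :
      dslope (fun z => sinh (c * z)) 0 z = sinh (c * z) / z := by
    simp [dslope_of_ne _ hz, slope_def_field]
  refine ⟨dslope (fun z => sinh (a * z)) 0 / dslope (fun z => sinh (b * z)) 0,
    fun z hz => ((hdslope a z).div (hdslope b z) ?_).differentiableWithinAt, fun z hz => ?_⟩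
  · rcases eq_or_ne z 0 with rfl | hz0
    · have hderiv : deriv (fun z => sinh (b * z)) 0 = b := by
        simpa using (((hasDerivAt_id (0 : ℂ)).const_mul b).csinh).deriv
      rwa [dslope_same, hderiv]
    · rw [hdslope_of_ne b hz0]
      exact div_ne_zero (mt hz hz0) hz0
  · rw [Pi.div_apply, hdslope_of_ne a hz, hdslope_of_ne b hz, div_div_div_cancel_right₀ hz]

theorem sinh_mul_div_sinh_mul_add_add_sub {a b w θ : ℂ} (ha : a * w = θ * I) (hb : b * w = π * I)
    (z : ℂ) :
    sinh (a * (z + w)) / sinh (b * (z + w)) + sinh (a * (z - w)) / sinh (b * (z - w)) =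
      -2 * cos θ * (sinh (a * z) / sinh (b * z)) := by
  rw [mul_add, mul_sub, mul_add, mul_sub, ha, hb, sinh_add_pi_mul_I, sinh_sub_pi_mul_I,
    div_neg, div_neg, ← neg_add, ← add_div, sinh_add_mul_I_add_sinh_sub_mul_I]
  ring

theorem stmt_14_general (s γ : ℝ) (hs : 0 < s)
    (φ : ℂ → ℂ)
    (hφ : ∀ z : ℂ, φ z = ((1 / (2 * s * Real.sin γ) : ℝ) : ℂ) *
        (Complex.sinh ((((Real.pi - γ) / s : ℝ) : ℂ) * z) /
          Complex.sinh (((Real.pi / s : ℝ) : ℂ) * z))) :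
    MeromorphicOn φ Set.univ ∧
    DifferentiableOn ℂ φ {z : ℂ | ∀ n : ℤ, z ≠ Complex.I * s * n} ∧
    (∃ Φ : ℂ → ℂ,
      DifferentiableOn ℂ Φ {z : ℂ | ∀ n : ℤ, n ≠ 0 → z ≠ Complex.I * s * n} ∧
      ∀ z : ℂ, (∀ n : ℤ, z ≠ Complex.I * s * n) → Φ z = φ z) ∧
    (∀ z : ℂ, (∀ n : ℤ, z ≠ Complex.I * s * n) →
      φ (z + Complex.I * s) + φ (z - Complex.I * s) - ((2 * Real.cos γ : ℝ) : ℂ) * φ z = 0) := by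
  set c : ℂ := ((1 / (2 * s * Real.sin γ) : ℝ) : ℂ)
  set A : ℂ := (((π - γ) / s : ℝ) : ℂ)
  set B : ℂ := ((π / s : ℝ) : ℂ)
  have hs0 : (s : ℂ) ≠ 0 := ofReal_ne_zero.2 hs.ne'
  have hB : B = π / s := ofReal_div π s
  have hB0 : B ≠ 0 := hB ▸ div_ne_zero (ofReal_ne_zero.2 Real.pi_ne_zero) hs0
  have hsinhB (z : ℂ) : sinh (B * z) = 0 ↔ ∃ n : ℤ, z = I * s * n :=
    hB ▸ sinh_pi_div_mul_eq_zero_iff hs0 z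
  obtain ⟨Φ, hΦ, hΦ_eq⟩ := exists_differentiableOn_eq_sinh_mul_div_sinh_mul A hB0
  obtain rfl : φ = fun z => c * (sinh (A * z) / sinh (B * z)) := funext hφ
  refine ⟨(MeromorphicOn.const c).fun_mul (meromorphicOn_sinh_mul_div_sinh_mul A B),
    fun z hz => ?_, ⟨fun z => c * Φ z, fun z hz => ?_, fun z hz => ?_⟩, fun z _ => ?_⟩
  · have hsinh : sinh (B * z) ≠ 0 := fun h =>
      let ⟨n, hn⟩ := (hsinhB z).1 h
      hz n hn
    exact ((differentiableAt_sinh_mul_div_sinh_mul A B hsinh).const_mul c).differentiableWithinAt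
  · refine (hΦ.mono fun z hz h => ?_).const_mul c z hz
    obtain ⟨n, rfl⟩ := (hsinhB z).1 h
    by_contra hn
    exact hz n (by rintro rfl; simp at hn) rfl
  · exact congrArg (c * ·) (hΦ_eq z (by simpa using hz 0))
  · have hA : A * (I * s) = (π - γ : ℂ) * I := by simp only [A]; push_cast; field_simp
    have hBs : B * (I * s) = π * I := by rw [hB]; field_simp
    rw [← mul_add, sinh_mul_div_sinh_mul_add_add_sub hA hBs, cos_pi_sub]
    push_cast
    ring

/-- The explicit kernel `φ_d(z) = (1/(2s sin γ)) sinh(((π−γ)/s)z)/sinh((π/s)z)` (with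
`d = 2 cos γ`, `sin γ ≠ 0`) is meromorphic on `ℂ`, analytic on `ℂ ∖ isℤ` (the singularity at
`0` being removable), and satisfies `φ_d(z+is) + φ_d(z−is) − d φ_d(z) = 0` off `isℤ`. -/
theorem stmt_14 (s γ : ℝ) (hs : 0 < s) (hγ : Real.sin γ ≠ 0)
    (φ : ℂ → ℂ)
    (hφ : ∀ z : ℂ, φ z = ((1 / (2 * s * Real.sin γ) : ℝ) : ℂ) *
        (Complex.sinh ((((Real.pi - γ) / s : ℝ) : ℂ) * z) /
          Complex.sinh (((Real.pi / s : ℝ) : ℂ) * z))) :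
    MeromorphicOn φ Set.univ ∧
    DifferentiableOn ℂ φ {z : ℂ | ∀ n : ℤ, z ≠ Complex.I * s * n} ∧
    (∃ Φ : ℂ → ℂ,
      DifferentiableOn ℂ Φ {z : ℂ | ∀ n : ℤ, n ≠ 0 → z ≠ Complex.I * s * n} ∧
      ∀ z : ℂ, (∀ n : ℤ, z ≠ Complex.I * s * n) → Φ z = φ z) ∧
    (∀ z : ℂ, (∀ n : ℤ, z ≠ Complex.I * s * n) →
      φ (z + Complex.I * s) + φ (z - Complex.I * s) - ((2 * Real.cos γ : ℝ) : ℂ) * φ z = 0) :=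
  stmt_14_general s γ hs φ hφ
end

section
/- Let N ≥ 1, and suppose G is a real N×N matrix which is non-negative, irreducible, diagonalisable over ℝ, and whose eigenvalues all lie in (−2, 2). Then the constant Y-system Y_n² = ∏_{m=1}^N (1 + Y_m)^{G_{nm}} (n = 1, …, N) has at most one solution with all Y_n real and strictly positive; equivalently, the system 2 y_n = Σ_m G_{nm} log(1 + e^{y_m}) in the real variables y_n = log Y_n has at most one solution in ℝ^N. -/
/-- A real square matrix is irreducible if for all `i, j` some positive power has a nonzero
`(i,j)` entry. -/
def IrreducibleMatrix {N : ℕ} (A : Matrix (Fin N) (Fin N) ℝ) : Prop :=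
  ∀ i j, ∃ m : ℕ, 0 < m ∧ (A ^ m) i j ≠ 0

/-- `log (1 + exp ·)` is 1-Lipschitz (monotone version). -/
lemma log_one_add_exp_le {a b : ℝ} (h : b ≤ a) :
    Real.log (1 + Real.exp a) - Real.log (1 + Real.exp b) ≤ a - b := by
  have hb : (0:ℝ) < 1 + Real.exp b := by positivity
  have h1 : (1:ℝ) ≤ Real.exp (a - b) := Real.one_le_exp (by linarith)
  have h2 : 1 + Real.exp a ≤ Real.exp (a - b) * (1 + Real.exp b) := by
    have : Real.exp (a - b) * Real.exp b = Real.exp a := by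
      rw [← Real.exp_add]; ring_nf
    nlinarith [Real.exp_pos b]
  have h3 : Real.log (1 + Real.exp a) ≤ Real.log (Real.exp (a - b) * (1 + Real.exp b)) :=
    Real.log_le_log (by positivity) h2
  rw [Real.log_mul (by positivity) (ne_of_gt hb), Real.log_exp] at h3
  linarith

lemma log_one_add_exp_lip (a b : ℝ) :
    |Real.log (1 + Real.exp a) - Real.log (1 + Real.exp b)| ≤ |a - b| := by
  rcases le_total b a with h | h
  · have h1 := log_one_add_exp_le h
    have h2 : Real.log (1 + Real.exp b) ≤ Real.log (1 + Real.exp a) :=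
      Real.log_le_log (by positivity) (by nlinarith [Real.exp_le_exp.2 h])
    rw [abs_of_nonneg (by linarith), abs_of_nonneg (by linarith)]; exact h1
  · have h1 := log_one_add_exp_le h
    have h2 : Real.log (1 + Real.exp a) ≤ Real.log (1 + Real.exp b) :=
      Real.log_le_log (by positivity) (by nlinarith [Real.exp_le_exp.2 h])
    rw [abs_of_nonpos (by linarith), abs_of_nonpos (by linarith)]; linarith

/-- Uniqueness for the constant Y-system: for `G` non-negative, irreducible, diagonalisable
over `ℝ` with all eigenvalues in `(−2,2)`, the system `2 y_n = Σ_m G_{nm} log(1 + e^{y_m})`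
(equivalently `Y_n² = ∏_m (1+Y_m)^{G_{nm}}` with `Y_n = e^{y_n} > 0`) has at most one
solution in `ℝ^N`. -/
theorem stmt_19 (N : ℕ) (hN : 1 ≤ N) (G : Matrix (Fin N) (Fin N) ℝ)
    (hnn : ∀ i j, 0 ≤ G i j) (hirr : IrreducibleMatrix G)
    (hdiag : ∃ P D : Matrix (Fin N) (Fin N) ℝ, IsUnit P.det ∧ D.IsDiag ∧
        (∀ i, D i i ∈ Set.Ioo (-2 : ℝ) 2) ∧ G = P * D * P⁻¹)
    (y y' : Fin N → ℝ)
    (hy : ∀ n, 2 * y n = ∑ m, G n m * Real.log (1 + Real.exp (y m)))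
    (hy' : ∀ n, 2 * y' n = ∑ m, G n m * Real.log (1 + Real.exp (y' m))) :
    y = y' := by
  obtain ⟨P, D, hP, hD, hEig, hG⟩ := hdiag
  set d : Fin N → ℝ := fun i => |y i - y' i| with hd
  have hdnn : ∀ i, 0 ≤ d i := fun i => abs_nonneg _
  -- one-step inequality
  have step : ∀ n, 2 * d n ≤ ∑ m, G n m * d m := by
    intro n
    have : 2 * (y n - y' n) =
        ∑ m, G n m * (Real.log (1 + Real.exp (y m)) - Real.log (1 + Real.exp (y' m))) := by
      rw [mul_sub, hy n, hy' n, ← Finset.sum_sub_distrib]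
      exact Finset.sum_congr rfl fun m _ => by ring
    calc 2 * d n = |2 * (y n - y' n)| := by
          rw [abs_mul, abs_of_nonneg (by norm_num : (0:ℝ) ≤ 2)]
      _ = |∑ m, G n m * (Real.log (1 + Real.exp (y m)) - Real.log (1 + Real.exp (y' m)))| := by
          rw [this]
      _ ≤ ∑ m, |G n m * (Real.log (1 + Real.exp (y m)) - Real.log (1 + Real.exp (y' m)))| :=
          Finset.abs_sum_le_sum_abs _ _
      _ ≤ ∑ m, G n m * d m := by
          refine Finset.sum_le_sum fun m _ => ?_
          rw [abs_mul, abs_of_nonneg (hnn n m)]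
          exact mul_le_mul_of_nonneg_left (log_one_add_exp_lip _ _) (hnn n m)
  -- powers of G have nonneg entries
  have pownn : ∀ k : ℕ, ∀ i j, 0 ≤ (G ^ k) i j := by
    intro k
    induction k with
    | zero => intro i j; simp [Matrix.one_apply]; split <;> norm_num
    | succ k ih =>
      intro i j
      rw [pow_succ, Matrix.mul_apply]
      exact Finset.sum_nonneg fun l _ => mul_nonneg (ih i l) (hnn l j)
  -- iterated inequality
  have powstep : ∀ k : ℕ, ∀ n, 2 ^ k * d n ≤ ∑ m, (G ^ k) n m * d m := by
    intro k
    induction k with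
    | zero => intro n; simp [Matrix.one_apply]
    | succ k ih =>
      intro n
      have h1 : (2:ℝ) ^ (k+1) * d n ≤ 2 ^ k * ∑ l, G n l * d l := by
        have h2k : (0:ℝ) ≤ 2 ^ k := by positivity
        calc (2:ℝ) ^ (k+1) * d n = 2 ^ k * (2 * d n) := by ring
          _ ≤ 2 ^ k * ∑ l, G n l * d l := mul_le_mul_of_nonneg_left (step n) h2k
      have h2 : 2 ^ k * ∑ l, G n l * d l ≤ ∑ l, G n l * ∑ m, (G ^ k) l m * d m := by
        rw [Finset.mul_sum]
        refine Finset.sum_le_sum fun l _ => ?_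
        calc 2 ^ k * (G n l * d l) = G n l * (2 ^ k * d l) := by ring
          _ ≤ G n l * ∑ m, (G ^ k) l m * d m :=
            mul_le_mul_of_nonneg_left (ih l) (hnn n l)
      have h3 : ∑ l, G n l * ∑ m, (G ^ k) l m * d m = ∑ m, (G ^ (k+1)) n m * d m := by
        rw [pow_succ']
        simp only [Matrix.mul_apply, Finset.sum_mul, Finset.mul_sum]
        rw [Finset.sum_comm]
        exact Finset.sum_congr rfl fun m _ => Finset.sum_congr rfl fun l _ => by ring
      linarith
  -- powers via diagonalization
  have hGpow : ∀ k : ℕ, G ^ k = P * (Matrix.diagonal (D.diag)) ^ k * P⁻¹ := by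
    intro k
    induction k with
    | zero => simp [Matrix.mul_nonsing_inv P hP]
    | succ k ih =>
      rw [pow_succ, ih, pow_succ, hG, hD.diagonal_diag]
      have hinv : P⁻¹ * P = 1 := Matrix.nonsing_inv_mul P hP
      calc P * (D ^ k) * P⁻¹ * (P * D * P⁻¹)
          = P * (D ^ k) * (P⁻¹ * P) * D * P⁻¹ := by
            simp only [Matrix.mul_assoc]
        _ = P * (D ^ k * D) * P⁻¹ := by rw [hinv]; simp only [Matrix.mul_assoc, Matrix.mul_one]
  haveI : Nonempty (Fin N) := ⟨⟨0, hN⟩⟩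
  set ρ : ℝ := Finset.univ.sup' Finset.univ_nonempty (fun i => |D i i|) with hρ
  have hρnn : 0 ≤ ρ := le_trans (abs_nonneg (D (Classical.arbitrary (Fin N)) (Classical.arbitrary (Fin N))))
    (Finset.le_sup' (fun i => |D i i|) (Finset.mem_univ (Classical.arbitrary (Fin N))))
  have hρlt : ρ < 2 := by
    rw [hρ, Finset.sup'_lt_iff]
    intro i _
    exact abs_lt.2 ⟨(hEig i).1, (hEig i).2⟩
  have hρi : ∀ i, |D i i| ≤ ρ := fun i => Finset.le_sup' (fun i => |D i i|) (Finset.mem_univ i)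
  -- entry bound on G^k
  set C : ℝ := ∑ n, ∑ m, ∑ i, |P n i| * |P⁻¹ i m| with hC
  have hCnn : 0 ≤ C := Finset.sum_nonneg fun _ _ => Finset.sum_nonneg fun _ _ =>
    Finset.sum_nonneg fun _ _ => mul_nonneg (abs_nonneg _) (abs_nonneg _)
  have hentry : ∀ k : ℕ, ∀ n m, |(G ^ k) n m| ≤ ρ ^ k * C := by
    intro k n m
    have hexp : (G ^ k) n m = ∑ i, P n i * (D i i) ^ k * P⁻¹ i m := by
      rw [hGpow k, Matrix.diagonal_pow, Matrix.mul_apply]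
      refine Finset.sum_congr rfl fun i _ => ?_
      rw [Matrix.mul_diagonal]
      simp [Matrix.diag, Pi.pow_apply]
    rw [hexp]
    calc |∑ i, P n i * (D i i) ^ k * P⁻¹ i m|
        ≤ ∑ i, |P n i * (D i i) ^ k * P⁻¹ i m| := Finset.abs_sum_le_sum_abs _ _
      _ ≤ ∑ i, ρ ^ k * (|P n i| * |P⁻¹ i m|) := by
          refine Finset.sum_le_sum fun i _ => ?_
          rw [abs_mul, abs_mul, abs_pow]
          have h1 : |D i i| ^ k ≤ ρ ^ k := pow_le_pow_left₀ (abs_nonneg _) (hρi i) k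
          have := mul_le_mul_of_nonneg_right
            (mul_le_mul_of_nonneg_left h1 (abs_nonneg (P n i))) (abs_nonneg (P⁻¹ i m))
          nlinarith [abs_nonneg (P n i), abs_nonneg (P⁻¹ i m), pow_nonneg hρnn k]
      _ = ρ ^ k * ∑ i, |P n i| * |P⁻¹ i m| := by rw [Finset.mul_sum]
      _ ≤ ρ ^ k * C := by
          refine mul_le_mul_of_nonneg_left ?_ (pow_nonneg hρnn k)
          calc ∑ i, |P n i| * |P⁻¹ i m|
              ≤ ∑ m, ∑ i, |P n i| * |P⁻¹ i m| := by
                refine Finset.single_le_sum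
                  (f := fun m' => ∑ i, |P n i| * |P⁻¹ i m'|)
                  (fun m' _ => ?_) (Finset.mem_univ m)
                exact Finset.sum_nonneg fun _ _ => mul_nonneg (abs_nonneg _) (abs_nonneg _)
            _ ≤ C := by
                refine Finset.single_le_sum
                  (f := fun n' => ∑ m, ∑ i, |P n' i| * |P⁻¹ i m|)
                  (fun n' _ => ?_) (Finset.mem_univ n)
                exact Finset.sum_nonneg fun _ _ => Finset.sum_nonneg fun _ _ =>
                  mul_nonneg (abs_nonneg _) (abs_nonneg _)
  set M : ℝ := ∑ m, d m with hM
  have hMnn : 0 ≤ M := Finset.sum_nonneg fun m _ => hdnn m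
  have hdM : ∀ m, d m ≤ M := fun m =>
    Finset.single_le_sum (fun m' _ => hdnn m') (Finset.mem_univ m)
  -- final bound
  have key : ∀ n, ∀ k : ℕ, d n ≤ (ρ / 2) ^ k * (N * C * M) := by
    intro n k
    have h1 : 2 ^ k * d n ≤ ∑ m, (G ^ k) n m * d m := powstep k n
    have h2 : ∑ m, (G ^ k) n m * d m ≤ ∑ m : Fin N, ρ ^ k * C * M := by
      refine Finset.sum_le_sum fun m _ => ?_
      calc (G ^ k) n m * d m ≤ (ρ ^ k * C) * d m :=
            mul_le_mul_of_nonneg_right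
              ((le_abs_self _).trans (hentry k n m)) (hdnn m)
        _ ≤ (ρ ^ k * C) * M := by
            refine mul_le_mul_of_nonneg_left (hdM m) ?_
            exact mul_nonneg (pow_nonneg hρnn k) hCnn
    have h3 : (∑ _m : Fin N, ρ ^ k * C * M) = N * (ρ ^ k * C * M) := by
      rw [Finset.sum_const, Finset.card_univ, Fintype.card_fin, nsmul_eq_mul]
    have h4 : 2 ^ k * d n ≤ N * (ρ ^ k * C * M) := by
      rw [← h3]; exact h1.trans h2
    have h5 : (0:ℝ) < 2 ^ k := by positivity
    rw [div_pow, div_mul_eq_mul_div, le_div_iff₀ h5]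
    calc d n * 2 ^ k = 2 ^ k * d n := by ring
      _ ≤ N * (ρ ^ k * C * M) := h4
      _ = ρ ^ k * (N * C * M) := by ring
  have hten : Filter.Tendsto (fun k : ℕ => (ρ / 2) ^ k * (N * C * M)) Filter.atTop (nhds 0) := by
    have : Filter.Tendsto (fun k : ℕ => (ρ / 2) ^ k) Filter.atTop (nhds 0) := by
      apply tendsto_pow_atTop_nhds_zero_of_abs_lt_one
      rw [abs_of_nonneg (by linarith : (0:ℝ) ≤ ρ / 2)]
      linarith
    simpa using this.mul_const (N * C * M)
  have hd0 : ∀ n, d n = 0 := fun n =>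
    le_antisymm (ge_of_tendsto' hten (key n)) (hdnn n)
  funext n
  have := hd0 n
  rw [hd, abs_eq_zero, sub_eq_zero] at this
  exact this
end
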